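/- arXiv:1808.08991 — 2 statements merged into one kernel-verified Lean document; each statement's English description precedes it below -/
import Mathlib

section
/- Let F, t*, f(t*), ε be as follows: 0 < F(t*) < 1, F differentiable at t* with derivative f(t*) > 0, ε = f(t*)/F(t*). Let (c_n), (l_n) be positive integers with c_n → ∞, l_n → ∞, l_n·F(t*)^{c_n} → 1. For each n let T^{(n)}_{i,j} (1 ≤ i ≤ c_n, 1 ≤ j ≤ l_n) be i.i.d. with distribution function F, and fix a real t. Let N_n be the number of column indices j ≤ l_n such that max_{1≤i≤c_n} T^{(n)}_{i,j} ≤ t* + t/c_n. Then for every nonnegative integer k, P(N_n = k) converges, as n → ∞, to e^{−λ} λ^k / k! where λ = exp(ε t). (The number of scaled column maxima below the level t converges in distribution to a Poisson random variable with mean exp(ε t).) -/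
/-!
A column maximum is at most `s` exactly when every entry of the column is, so the column events
are independent, each of probability `F(s)^c`, and `Nₙ` is binomial with parameters `lₙ` and
`F(sₙ)^{cₙ}`, where `sₙ = t* + t/cₙ`. Differentiability gives
`F(sₙ) = F(t*) (1 + ε t/cₙ + o(1/cₙ))`, hence
`lₙ F(sₙ)^{cₙ} = lₙ F(t*)^{cₙ} (1 + ε t/cₙ + o(1/cₙ))^{cₙ} → exp (ε t)`,
and the binomial laws converge to the Poisson law with that mean (law of rare events).
-/

open MeasureTheory ProbabilityTheory Filter Topology

section Limits

variable {ι : Type*} {L : Filter ι}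

lemma tendsto_one_add_pow_exp_of_tendsto_mul {m : ι → ℕ} {y : ι → ℝ} {a : ℝ}
    (hy : Tendsto y L (𝓝 0)) (hmy : Tendsto (fun i ↦ m i * y i) L (𝓝 a)) :
    Tendsto (fun i ↦ (1 + y i) ^ m i) L (𝓝 (Real.exp a)) := by
  have hpos : ∀ᶠ i in L, 0 < 1 + y i :=
    (hy.eventually (eventually_gt_nhds (show (-1 : ℝ) < 0 by norm_num))).mono
      fun i hi ↦ by linarith
  -- squeeze `m log (1 + y)` using `y / (1 + y) ≤ log (1 + y) ≤ y`
  have hlower : Tendsto (fun i ↦ m i * y i / (1 + y i)) L (𝓝 a) := by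
    have := hmy.div (tendsto_const_nhds.add hy) (by norm_num : (1 : ℝ) + 0 ≠ 0)
    rwa [add_zero, div_one] at this
  have hlog : Tendsto (fun i ↦ m i * Real.log (1 + y i)) L (𝓝 a) := by
    refine tendsto_of_tendsto_of_tendsto_of_le_of_le' hlower hmy ?_ ?_
    · filter_upwards [hpos] with i hi
      have := Real.one_sub_inv_le_log_of_pos hi
      rw [mul_div_assoc]
      refine mul_le_mul_of_nonneg_left ?_ (Nat.cast_nonneg _)
      calc y i / (1 + y i) = 1 - (1 + y i)⁻¹ := by field_simp; ring
        _ ≤ _ := this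
    · filter_upwards [hpos] with i hi
      refine mul_le_mul_of_nonneg_left ?_ (Nat.cast_nonneg _)
      linarith [Real.log_le_sub_one_of_pos hi]
  refine ((Real.continuous_exp.tendsto a).comp hlog).congr' ?_
  filter_upwards [hpos] with i hi
  simp [Real.exp_nat_mul, Real.exp_log hi]

/-- The law of rare events along an arbitrary filter; Mathlib's
`tendsto_choose_mul_pow_of_tendsto_mul_atTop` is the case `l = id`. -/
theorem tendsto_choose_mul_pow_mul_one_sub_pow {l : ι → ℕ} {x : ι → ℝ} {r : ℝ}
    (hl : Tendsto l L atTop) (hlx : Tendsto (fun i ↦ l i * x i) L (𝓝 r)) (k : ℕ) :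
    Tendsto (fun i ↦ (l i).choose k * x i ^ k * (1 - x i) ^ (l i - k)) L
      (𝓝 (Real.exp (-r) * r ^ k / k.factorial)) := by
  have hlR : Tendsto (fun i ↦ (l i : ℝ)) L atTop := tendsto_natCast_atTop_atTop.comp hl
  have hx : Tendsto x L (𝓝 0) := by
    have := hlx.mul hlR.inv_tendsto_atTop
    rw [mul_zero] at this
    refine this.congr' ?_
    filter_upwards [hl.eventually_gt_atTop 0] with i hi
    simp only [Pi.inv_apply]
    field_simp
  have hchoose : Tendsto (fun i ↦ (l i).choose k * x i ^ k) L (𝓝 (r ^ k / k.factorial)) := by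
    have hequiv := ((isEquivalent_choose k).comp_tendsto hl).mul
      (Asymptotics.IsEquivalent.refl (u := fun i ↦ x i ^ k))
    refine hequiv.tendsto_nhds_iff.mpr (((hlx.pow k).div_const _).congr fun i ↦ ?_)
    simp only [Pi.mul_apply, Function.comp_apply]
    ring
  have hpow : Tendsto (fun i ↦ (1 - x i) ^ (l i - k)) L (𝓝 (Real.exp (-r))) := by
    refine (tendsto_one_add_pow_exp_of_tendsto_mul (y := fun i ↦ -x i) (by simpa using hx.neg)
      ?_).congr fun i ↦ by rw [sub_eq_add_neg]
    have : Tendsto (fun i ↦ -(l i * x i) + k * x i) L (𝓝 (-r + k * 0)) :=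
      hlx.neg.add (hx.const_mul _)
    rw [mul_zero, add_zero] at this
    refine this.congr' ?_
    filter_upwards [hl.eventually_ge_atTop k] with i hi
    push_cast [hi]
    ring
  simpa [mul_div_right_comm, mul_comm] using hchoose.mul hpow

lemma HasDerivAt.tendsto_mul_sub_of_tendsto_atTop {f : ℝ → ℝ} {f' x : ℝ}
    (hf : HasDerivAt f f' x) {u : ι → ℝ} (hu : Tendsto u L atTop) (t : ℝ) :
    Tendsto (fun i ↦ u i * (f (x + t / u i) - f x)) L (𝓝 (f' * t)) := by
  rcases eq_or_ne t 0 with rfl | ht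
  · simpa using tendsto_const_nhds
  have hstep : Tendsto (fun i ↦ t / u i) L (𝓝[≠] 0) :=
    tendsto_nhdsWithin_iff.mpr ⟨tendsto_const_nhds.div_atTop hu,
      (hu.eventually_gt_atTop 0).mono fun i hi ↦ div_ne_zero ht hi.ne'⟩
  refine (((hasDerivAt_iff_tendsto_slope_zero.mp hf).comp hstep).mul_const t).congr' ?_
  filter_upwards [hu.eventually_gt_atTop 0] with i hi
  simp only [Function.comp_apply, smul_eq_mul]
  field_simp

lemma tendsto_mul_pow_add_div_of_hasDerivAt {F : ℝ → ℝ} {f' x : ℝ} (hFx : F x ≠ 0)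
    (hd : HasDerivAt F f' x) {c l : ι → ℕ} (hc : Tendsto c L atTop)
    (hcouple : Tendsto (fun i ↦ l i * F x ^ c i) L (𝓝 1)) (t : ℝ) :
    Tendsto (fun i ↦ l i * F (x + t / c i) ^ c i) L (𝓝 (Real.exp (f' / F x * t))) := by
  have hcR : Tendsto (fun i ↦ (c i : ℝ)) L atTop := tendsto_natCast_atTop_atTop.comp hc
  set r : ι → ℝ := fun i ↦ F (x + t / c i) / F x - 1 with hr
  have hcr : Tendsto (fun i ↦ c i * r i) L (𝓝 (f' / F x * t)) := by
    rw [div_mul_eq_mul_div]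
    refine ((hd.tendsto_mul_sub_of_tendsto_atTop hcR t).div_const (F x)).congr fun i ↦ ?_
    simp only [hr]
    field_simp
  have hr0 : Tendsto r L (𝓝 0) := by
    have hshift : Tendsto (fun i ↦ x + t / c i) L (𝓝 x) := by
      simpa using tendsto_const_nhds.add (tendsto_const_nhds.div_atTop hcR)
    have := ((hd.continuousAt.tendsto.comp hshift).div_const (F x)).sub_const 1
    rwa [div_self hFx, sub_self] at this
  refine ((hcouple.mul (tendsto_one_add_pow_exp_of_tendsto_mul hr0 hcr)).congr fun i ↦ ?_).trans
    (by rw [one_mul])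
  simp only [hr, add_sub_cancel, mul_assoc, ← mul_pow, mul_div_cancel₀ _ hFx]

end Limits

namespace ProbabilityTheory

variable {Ω ι : Type*} [MeasurableSpace Ω] {P : Measure Ω}

lemma iIndepSet.measureReal_setOf_forall_mem_iff [Fintype ι] {A : ι → Set Ω}
    (hA : ∀ i, MeasurableSet (A i)) (h : iIndepSet A P) {p : ℝ} (hp : ∀ i, P.real (A i) = p)
    (S : Finset ι) :
    P.real {ω | ∀ i, ω ∈ A i ↔ i ∈ S} = p ^ S.card * (1 - p) ^ (Fintype.card ι - S.card) := by
  classical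
  have := h.isProbabilityMeasure
  set B : ι → Set Ω := fun i ↦ if i ∈ S then A i else (A i)ᶜ
  have hset : {ω | ∀ i, ω ∈ A i ↔ i ∈ S} = ⋂ i, B i := by
    ext ω
    simp only [Set.mem_ofPred_eq, Set.mem_iInter, B]
    refine forall_congr' fun i ↦ ?_
    split_ifs with hi <;> simp [hi]
  have hB : ∀ i, MeasurableSet[MeasurableSpace.generateFrom {A i}] (B i) := by
    intro i
    have hAi := MeasurableSpace.measurableSet_generateFrom (Set.mem_singleton (A i))
    simp only [B]
    split_ifs
    exacts [hAi, hAi.compl]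
  have hPB : ∀ i, P.real (B i) = if i ∈ S then p else 1 - p := by
    intro i
    simp only [B]
    split_ifs
    exacts [hp i, by rw [measureReal_compl (hA i), probReal_univ, hp i]]
  rw [hset, measureReal_def, ((iIndepSet_iff_iIndep A P).mp h).meas_iInter hB,
    ENNReal.toReal_prod]
  simp_rw [← measureReal_def, hPB]
  rw [Finset.prod_ite, Finset.prod_const, Finset.prod_const]
  simp [Finset.filter_notMem_eq_sdiff, Finset.card_univ_sdiff]

theorem iIndepSet.measureReal_ncard_setOf_mem_eq [Fintype ι] {A : ι → Set Ω}
    (hA : ∀ i, MeasurableSet (A i)) (h : iIndepSet A P) {p : ℝ} (hp : ∀ i, P.real (A i) = p)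
    (k : ℕ) :
    P.real {ω | {i | ω ∈ A i}.ncard = k}
      = (Fintype.card ι).choose k * p ^ k * (1 - p) ^ (Fintype.card ι - k) := by
  classical
  have := h.isProbabilityMeasure
  set N : Ω → Finset ι := fun ω ↦ {i | ω ∈ A i}
  have hfiber : ∀ S, N ⁻¹' {S} = {ω | ∀ i, ω ∈ A i ↔ i ∈ S} := by
    intro S
    ext ω
    simp [N, Finset.ext_iff]
  have hevent :
      {ω | {i | ω ∈ A i}.ncard = k} = N ⁻¹' ↑((Finset.univ : Finset ι).powersetCard k) := by
    ext ω
    simp [N, Set.ncard_eq_toFinset_card']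
  rw [hevent, ← sum_measureReal_preimage_singleton _ fun S _ ↦ ?_]
  · rw [Finset.sum_congr rfl fun S hS ↦ by
      rw [hfiber, h.measureReal_setOf_forall_mem_iff hA hp, (Finset.mem_powersetCard.mp hS).2]]
    simp [mul_assoc]
  · rw [hfiber]
    measurability

variable {κ β : Type*} [MeasurableSpace β] {X : κ → ι → Ω → β} {s : Set β}

lemma iIndepFun.measure_iInter_preimage [Fintype κ]
    (h : iIndepFun (fun p : κ × ι ↦ X p.1 p.2) P) (hs : MeasurableSet s) (j : ι) :
    P (⋂ i, X i j ⁻¹' s) = ∏ i, P (X i j ⁻¹' s) :=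
  (h.precomp (Prod.mk_left_injective j)).meas_iInter fun _ ↦ ⟨s, hs, rfl⟩

lemma iIndepFun.iIndepSet_iInter_preimage [Fintype κ] (hX : ∀ i j, Measurable (X i j))
    (h : iIndepFun (fun p : κ × ι ↦ X p.1 p.2) P) (hs : MeasurableSet s) :
    iIndepSet (fun j ↦ ⋂ i, X i j ⁻¹' s) P := by
  rw [iIndepSet_iff_meas_biInter fun j ↦ MeasurableSet.iInter fun i ↦ hX i j hs]
  intro S
  have hset : ⋂ j ∈ S, ⋂ i, X i j ⁻¹' s = ⋂ p ∈ Finset.univ ×ˢ S, X p.1 p.2 ⁻¹' s := by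
    ext ω
    simpa using ⟨fun H i j hj ↦ H j hj i, fun H j hj i ↦ H i j hj⟩
  rw [hset, h.meas_biInter fun p _ ↦ ⟨s, hs, rfl⟩, Finset.prod_product_right]
  exact Finset.prod_congr rfl fun j _ ↦ (h.measure_iInter_preimage hs j).symm

end ProbabilityTheory

theorem column_maxima_count_poisson_limit_general
    {Ω : Type*} [MeasurableSpace Ω] (P : Measure Ω)
    (F : ℝ → ℝ) (tstar fstar : ℝ)
    (h0 : 0 < F tstar)
    (hd : HasDerivAt F fstar tstar)
    (c l : ℕ → ℕ) (hcpos : ∀ n, 0 < c n)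
    (hc : Tendsto c atTop atTop) (hl : Tendsto l atTop atTop)
    (hcouple : Tendsto (fun n => (l n : ℝ) * F tstar ^ c n) atTop (nhds 1))
    (T : (n : ℕ) → Fin (c n) → Fin (l n) → Ω → ℝ)
    (hmeas : ∀ n i j, Measurable (T n i j))
    (hindep : ∀ n, iIndepFun
      (fun p : Fin (c n) × Fin (l n) => T n p.1 p.2) P)
    (hF : ∀ n i j t, (P {ω | T n i j ω ≤ t}).toReal = F t)
    (t : ℝ) (k : ℕ) :
    Tendsto
      (fun n => (P {ω | Set.ncard {j : Fin (l n) |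
          (Finset.univ.sup' (Finset.univ_nonempty_iff.mpr (Fin.pos_iff_nonempty.mp (hcpos n)))
            fun i => T n i j ω) ≤ tstar + t / c n} = k}).toReal)
      atTop
      (nhds (Real.exp (-Real.exp ((fstar / F tstar) * t)) *
        Real.exp ((fstar / F tstar) * t) ^ k / Nat.factorial k)) := by
  set s : ℕ → ℝ := fun n ↦ tstar + t / c n
  set column : (n : ℕ) → Fin (l n) → Set Ω := fun n j ↦ ⋂ i, T n i j ⁻¹' Set.Iic (s n)
  have hevent : ∀ n, {ω | Set.ncard {j : Fin (l n) |
      (Finset.univ.sup' (Finset.univ_nonempty_iff.mpr (Fin.pos_iff_nonempty.mp (hcpos n)))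
        fun i => T n i j ω) ≤ s n} = k} = {ω | {j | ω ∈ column n j}.ncard = k} := by
    intro n
    simp [column, Finset.sup'_le_iff]
  have hcolumn : ∀ n j, P.real (column n j) = F (s n) ^ c n := by
    intro n j
    rw [measureReal_def, (hindep n).measure_iInter_preimage measurableSet_Iic,
      ENNReal.toReal_prod]
    exact (Finset.prod_congr rfl fun i _ ↦ hF n i j (s n)).trans (by simp)
  have hbinomial : ∀ n, P.real {ω | {j | ω ∈ column n j}.ncard = k}
      = (l n).choose k * (F (s n) ^ c n) ^ k * (1 - F (s n) ^ c n) ^ (l n - k) := by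
    intro n
    have := (hindep n).iIndepSet_iInter_preimage (hmeas n) measurableSet_Iic
      |>.measureReal_ncard_setOf_mem_eq (fun j ↦ MeasurableSet.iInter fun i ↦
        hmeas n i j measurableSet_Iic) (hcolumn n) k
    rwa [Fintype.card_fin] at this
  refine (tendsto_choose_mul_pow_mul_one_sub_pow hl
    (tendsto_mul_pow_add_div_of_hasDerivAt h0.ne' hd hc hcouple t) k).congr fun n ↦ ?_
  rw [← measureReal_def, hevent, hbinomial]

/-- Poisson limit for the number of scaled column maxima below a level: for
`cₙ × lₙ` matrices of i.i.d. entries with distribution function `F`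
differentiable at `t*` (`0 < F t* < 1`, `f t* > 0`), under the geometric
coupling `lₙ (F t*)^{cₙ} → 1`, the number `Nₙ` of columns `j` whose maximum is
at most `t* + t/cₙ` satisfies `P(Nₙ = k) → e^{-λ} λ^k / k!` with
`λ = exp (ε t)`, `ε = f t*/F t*`. -/
theorem column_maxima_count_poisson_limit
    {Ω : Type*} [MeasurableSpace Ω] (P : Measure Ω) [IsProbabilityMeasure P]
    (F : ℝ → ℝ) (tstar fstar : ℝ)
    (h0 : 0 < F tstar) (h1 : F tstar < 1) (hf : 0 < fstar)
    (hd : HasDerivAt F fstar tstar)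
    (c l : ℕ → ℕ) (hcpos : ∀ n, 0 < c n) (hlpos : ∀ n, 0 < l n)
    (hc : Tendsto c atTop atTop) (hl : Tendsto l atTop atTop)
    (hcouple : Tendsto (fun n => (l n : ℝ) * F tstar ^ c n) atTop (nhds 1))
    (T : (n : ℕ) → Fin (c n) → Fin (l n) → Ω → ℝ)
    (hmeas : ∀ n i j, Measurable (T n i j))
    (hindep : ∀ n, iIndepFun
      (fun p : Fin (c n) × Fin (l n) => T n p.1 p.2) P)
    (hF : ∀ n i j t, (P {ω | T n i j ω ≤ t}).toReal = F t)
    (t : ℝ) (k : ℕ) :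
    Tendsto
      (fun n => (P {ω | Set.ncard {j : Fin (l n) |
          (Finset.univ.sup' (Finset.univ_nonempty_iff.mpr (Fin.pos_iff_nonempty.mp (hcpos n)))
            fun i => T n i j ω) ≤ tstar + t / c n} = k}).toReal)
      atTop
      (nhds (Real.exp (-Real.exp ((fstar / F tstar) * t)) *
        Real.exp ((fstar / F tstar) * t) ^ k / Nat.factorial k)) :=
  column_maxima_count_poisson_limit_general P F tstar fstar h0 hd c l hcpos hc hl hcouple T hmeas
    hindep hF t k
end

section
/- Let φ : ℝ → [0,1] be measurable. For each n ∈ ℕ let κ_n > 0 and g_n : ℝ → [0,∞) be measurable such that f_n := κ_n · g_n is a probability density on ℝ (i.e. ∫_ℝ f_n = 1). Suppose: (i) n·κ_n → κ for some κ > 0 as n → ∞; (ii) g_n → g pointwise almost everywhere for a measurable g : ℝ → [0,∞); (iii) there is an integrable function G with (1 − φ)·g_n ≤ G for all n. Then ( ∫_ℝ φ(x) f_n(x) dx )^n converges, as n → ∞, to exp( −κ ∫_ℝ (1 − φ(x)) g(x) dx ). (Consequently, the characteristic functional E[φ(X_1)···φ(X_n)] of n i.i.d. random variables with density f_n converges to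 the characteristic functional of the Poisson process on ℝ with intensity λ(x) = κ·g(x).) -/
open MeasureTheory Filter

lemma log_one_add_sub_self_abs {a : ℝ} (ha : |a| ≤ 1/2) :
    |Real.log (1 + a) - a| ≤ 2 * a ^ 2 := by
  have h1 : |(-a)| < 1 := by rw [abs_neg]; linarith
  have := Real.abs_log_sub_add_sum_range_le h1 1
  simp [Finset.sum_range_one] at this
  have h2 : 1 - |a| ≥ 1/2 := by linarith
  have hle : a ^ 2 / (1 - |a|) ≤ 2 * a ^ 2 := by
    rw [div_le_iff₀ (by linarith)]
    nlinarith [sq_nonneg a, abs_nonneg a]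
  calc |Real.log (1 + a) - a| = |(-a) + Real.log (1 + a)| := by congr 1; ring
    _ ≤ _ := this
    _ ≤ _ := hle

lemma pow_tendsto_exp (a : ℕ → ℝ) (L : ℝ)
    (h : Tendsto (fun n : ℕ => (n : ℝ) * a n) atTop (nhds L)) :
    Tendsto (fun n : ℕ => (1 + a n) ^ n) atTop (nhds (Real.exp L)) := by
  have ha0 : Tendsto a atTop (nhds 0) := by
    have := h.mul tendsto_one_div_atTop_nhds_zero_nat
    rw [mul_zero] at this
    apply this.congr'
    filter_upwards [eventually_gt_atTop 0] with n hn
    field_simp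
  have hev : ∀ᶠ n : ℕ in atTop, |a n| ≤ 1/2 := by
    have habs : Tendsto (fun n => |a n|) atTop (nhds 0) := by simpa using ha0.abs
    exact habs.eventually_le_const (by norm_num)
  -- n * log (1 + a n) → L
  have hlog : Tendsto (fun n : ℕ => (n : ℝ) * Real.log (1 + a n)) atTop (nhds L) := by
    have hdiff : Tendsto (fun n : ℕ => (n : ℝ) * Real.log (1 + a n) - (n : ℝ) * a n) atTop (nhds 0) := by
      have hb : Tendsto (fun n : ℕ => 2 * |(n:ℝ) * a n| * |a n|) atTop (nhds 0) := by
        have := (h.abs.mul ha0.abs).const_mul 2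
        simpa [mul_assoc] using this
      refine squeeze_zero_norm' ?_ hb
      filter_upwards [hev] with n hn
      have := log_one_add_sub_self_abs hn
      calc ‖(n : ℝ) * Real.log (1 + a n) - (n : ℝ) * a n‖
          = (n : ℝ) * |Real.log (1 + a n) - a n| := by
            rw [← mul_sub, Real.norm_eq_abs, abs_mul, Nat.abs_cast]
        _ ≤ (n : ℝ) * (2 * a n ^ 2) := by
            exact mul_le_mul_of_nonneg_left this (Nat.cast_nonneg n)
        _ = 2 * |(n:ℝ) * a n| * |a n| := by
            rw [abs_mul, Nat.abs_cast, ← sq_abs (a n)]; ring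
    have := hdiff.add h
    simpa using this
  have := (Real.continuous_exp.tendsto L).comp hlog
  apply this.congr'
  filter_upwards [hev] with n hn
  have hpos : 0 < 1 + a n := by cases abs_le.mp hn; linarith
  simp only [Function.comp]
  rw [Real.exp_nat_mul, Real.exp_log hpos]

/-- General Poisson-process limit-law (characteristic-functional form): if
`fₙ = κₙ gₙ` are probability densities on `ℝ` with `n κₙ → κ > 0`,
`gₙ → g` pointwise a.e., and `(1 - φ) gₙ` dominated by an integrable `G`, then
`(∫ φ fₙ)ⁿ → exp (-κ ∫ (1 - φ x) g x dx)` — the characteristic functional of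
`n` i.i.d. points with density `fₙ` converges to that of the Poisson process
with intensity `λ(x) = κ g(x)`. -/
theorem characteristic_functional_poisson_limit
    (φ : ℝ → ℝ) (hφm : Measurable φ) (hφ01 : ∀ x, φ x ∈ Set.Icc (0 : ℝ) 1)
    (κ : ℕ → ℝ) (hκpos : ∀ n, 0 < κ n)
    (g : ℕ → ℝ → ℝ) (hgm : ∀ n, Measurable (g n)) (hgnn : ∀ n x, 0 ≤ g n x)
    (hprob : ∀ n, ∫ x : ℝ, κ n * g n x = 1)
    (κlim : ℝ) (hκlim : 0 < κlim)
    (hcouple : Tendsto (fun n : ℕ => (n : ℝ) * κ n) atTop (nhds κlim))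
    (glim : ℝ → ℝ) (hglimm : Measurable glim) (hglimnn : ∀ x, 0 ≤ glim x)
    (hae : ∀ᵐ x : ℝ, Tendsto (fun n => g n x) atTop (nhds (glim x)))
    (G : ℝ → ℝ) (hG : Integrable G)
    (hdom : ∀ n x, (1 - φ x) * g n x ≤ G x) :
    Tendsto (fun n : ℕ => (∫ x : ℝ, φ x * (κ n * g n x)) ^ n) atTop
      (nhds (Real.exp (-κlim * ∫ x : ℝ, (1 - φ x) * glim x))) := by
  have hφ0 : ∀ x, 0 ≤ φ x := fun x => (hφ01 x).1
  have hφ1 : ∀ x, φ x ≤ 1 := fun x => (hφ01 x).2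
  have hnn : ∀ n x, 0 ≤ (1 - φ x) * g n x := fun n x =>
    mul_nonneg (by linarith [hφ1 x]) (hgnn n x)
  have hmeas : ∀ n, AEStronglyMeasurable (fun x => (1 - φ x) * g n x) volume :=
    fun n => ((measurable_const.sub hφm).mul (hgm n)).aestronglyMeasurable
  have hInt1 : ∀ n, Integrable (fun x => (1 - φ x) * g n x) := by
    intro n
    refine hG.mono' (hmeas n) (Filter.Eventually.of_forall fun x => ?_)
    rw [Real.norm_eq_abs, abs_of_nonneg (hnn n x)]
    exact hdom n x
  have hfInt : ∀ n, Integrable (fun x => κ n * g n x) := by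
    intro n
    by_contra hc
    have := hprob n
    rw [integral_undef hc] at this
    norm_num at this
  -- key integral identity
  have key : ∀ n, ∫ x : ℝ, φ x * (κ n * g n x)
      = 1 - κ n * ∫ x : ℝ, (1 - φ x) * g n x := by
    intro n
    have hrw : (fun x => φ x * (κ n * g n x))
        = fun x => κ n * g n x - κ n * ((1 - φ x) * g n x) := by
      funext x; ring
    rw [hrw, integral_sub (hfInt n) ((hInt1 n).const_mul (κ n)), hprob n,
      MeasureTheory.integral_const_mul]
  -- dominated convergence
  have hI : Tendsto (fun n : ℕ => ∫ x : ℝ, (1 - φ x) * g n x) atTop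
      (nhds (∫ x : ℝ, (1 - φ x) * glim x)) := by
    refine tendsto_integral_of_dominated_convergence G hmeas hG ?_ ?_
    · intro n
      refine Filter.Eventually.of_forall fun x => ?_
      rw [Real.norm_eq_abs, abs_of_nonneg (hnn n x)]
      exact hdom n x
    · filter_upwards [hae] with x hx
      exact hx.const_mul _
  set I := ∫ x : ℝ, (1 - φ x) * glim x with hIdef
  have hmain := pow_tendsto_exp (fun n => -(κ n * ∫ x : ℝ, (1 - φ x) * g n x))
    (-(κlim * I)) ?_
  · have : Real.exp (-(κlim * I)) = Real.exp (-κlim * I) := by rw [neg_mul]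
    rw [this] at hmain
    refine hmain.congr fun n => ?_
    rw [key n, sub_eq_add_neg]
  · have := (hcouple.mul hI).neg
    refine this.congr fun n => ?_
    ring
end
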